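/- Let p ≡ 1 (mod 4) be prime, let 0 ≤ δ < 1, and let the Paley matrix Φ of p satisfy the (K, δ)-restricted isometry property. If I ⊆ F_p is an independent set in the Paley graph on F_p with |I| ≤ K, then |I| ≤ δ·√p + 1. -/

import Mathlib

open scoped BigOperators

/-- The Paley matrix: rows are indexed by the set `Q` of squares in `F_p`, columns
by `F_p` together with one extra index `∗` (here `none`). -/
noncomputable def paleyMatrix (p : ℕ) [Fact (Nat.Prime p)] :
    Matrix {x : ZMod p // IsSquare x} (Option (ZMod p)) ℂ := fun q j =>
  match j with
  | some j =>
      (if (q : ZMod p) = 0 then (1 : ℂ) / Real.sqrt p else (Real.sqrt (2 / p) : ℂ)) *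
        Complex.exp (-(2 * Real.pi * Complex.I) * (((q : ZMod p) * j).val : ℕ) / p)
  | none => if (q : ZMod p) = 0 then 1 else 0

/-- `Φ` satisfies the `(K, δ)`-restricted isometry property: for every real vector
`x` with at most `K` nonzero entries, `(1−δ)‖x‖² ≤ ‖Φx‖² ≤ (1+δ)‖x‖²`. -/
def RIP {m n : Type*} [Fintype m] [Fintype n] (Φ : Matrix m n ℂ)
    (K : ℕ) (δ : ℝ) : Prop :=
  ∀ x : n → ℝ, (Finset.univ.filter fun i => x i ≠ 0).card ≤ K →
    (1 - δ) * (∑ i, x i ^ 2) ≤ ∑ r, ‖∑ i, Φ r i * (x i : ℂ)‖ ^ 2 ∧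
    ∑ r, ‖∑ i, Φ r i * (x i : ℂ)‖ ^ 2 ≤ (1 + δ) * (∑ i, x i ^ 2)

/-- `S` is an independent set in the Paley graph on `F_p`: no two distinct elements
`x, y` of `S` are adjacent, i.e. `χ(x − y) ≠ 1`. -/
def IsPaleyIndepSet (p : ℕ) [Fact (Nat.Prime p)] (S : Finset (ZMod p)) : Prop :=
  ∀ x ∈ S, ∀ y ∈ S, x ≠ y → quadraticChar (ZMod p) (x - y) ≠ 1

/-!
Let `1_I` be the indicator of `I` on the columns `F_p`. The row weights satisfy
`c_q² = (1 + χ(q)) / p` on squares and `1 + χ(a) = 0` on non-squares, so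
`p ‖Φ 1_I‖² = ∑_{a ∈ F_p} (1 + χ(a)) |∑_{j ∈ I} e(-aj)|²`. Expanding the square, the untwisted part
is `p |I|` by orthogonality of characters, and the twisted part is `G ∑_{x, y ∈ I} χ(x - y)`,
where `G` is the quadratic Gauss sum. Since `p ≡ 1 (mod 4)`, `G² = p`, so `G = ±√p`; independence
of `I` forces `χ(x - y) = -1` for `x ≠ y`. Hence `|‖Φ 1_I‖² - |I|| = (|I|² - |I|) / √p`, and the
restricted isometry bound `δ |I|` on the left-hand side gives `|I| - 1 ≤ δ √p`.
-/

open Finset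

lemma AddChar.ofReal_norm_sq_sum {G : Type*} [AddCommGroup G] [Finite G] (ψ : AddChar G ℂ)
    (I : Finset G) :
    ((‖∑ j ∈ I, ψ j‖ ^ 2 : ℝ) : ℂ) = ∑ x ∈ I, ∑ y ∈ I, ψ (x - y) := by
  rw [Complex.ofReal_pow, ← Complex.mul_conj', map_sum, sum_mul_sum]
  simp_rw [sub_eq_add_neg, AddChar.map_add_eq_mul, AddChar.map_neg_eq_conj]

section CharacterSums

variable {F : Type*} [Field F] [Fintype F] [DecidableEq F]

variable (F) in
noncomputable def complexQuadraticChar : MulChar F ℂ :=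
  (quadraticChar F).ringHomComp (Int.castRingHom ℂ)

@[simp]
lemma complexQuadraticChar_apply (a : F) :
    complexQuadraticChar F a = quadraticChar F a := rfl

lemma complexQuadraticChar_ne_one (hF : ringChar F ≠ 2) : complexQuadraticChar F ≠ 1 :=
  (MulChar.ringHomComp_ne_one_iff (Int.cast_injective (α := ℂ))).mpr (quadraticChar_ne_one hF)

lemma complexQuadraticChar_isQuadratic : (complexQuadraticChar F).IsQuadratic :=
  (quadraticChar_isQuadratic F).comp _

lemma sum_quadraticChar_mul_addChar_mul (hF : ringChar F ≠ 2) {ψ : AddChar F ℂ}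
    (d : F) :
    ∑ a, (quadraticChar F a : ℂ) * ψ (a * d) =
      quadraticChar F d * gaussSum (complexQuadraticChar F) ψ := by
  rcases eq_or_ne d 0 with rfl | hd
  · simp only [mul_zero, AddChar.map_zero_eq_one, mul_one, quadraticChar_zero, Int.cast_zero,
      zero_mul]
    exact MulChar.sum_eq_zero_of_ne_one (complexQuadraticChar_ne_one hF)
  · have := gaussSum_mulShift_eq (complexQuadraticChar F) ψ (Units.mk0 d hd)
    rw [complexQuadraticChar_isQuadratic.inv] at this
    simpa [gaussSum, AddChar.mulShift_apply, mul_comm d] using this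

lemma gaussSum_complexQuadraticChar_eq_sqrt_or_eq_neg_sqrt (hF : ringChar F ≠ 2)
    (hF4 : Fintype.card F % 4 = 1) {ψ : AddChar F ℂ} (hψ : ψ.IsPrimitive) :
    gaussSum (complexQuadraticChar F) ψ = √(Fintype.card F) ∨
      gaussSum (complexQuadraticChar F) ψ = -√(Fintype.card F) := by
  have hsq := gaussSum_sq (complexQuadraticChar_ne_one hF) complexQuadraticChar_isQuadratic hψ
  rw [complexQuadraticChar_apply, quadraticChar_neg_one hF, ZMod.χ₄_nat_one_mod_four hF4] at hsq
  rw [← sq_eq_sq_iff_eq_or_eq_neg, hsq]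
  norm_cast
  simp

lemma sum_one_add_quadraticChar_mul_norm_sq (hF : ringChar F ≠ 2) {ψ : AddChar F ℂ}
    (hψ : ψ.IsPrimitive) (I : Finset F) :
    ∑ a, (1 + (quadraticChar F a : ℂ)) * ((‖∑ j ∈ I, ψ (a * j)‖ ^ 2 : ℝ) : ℂ) =
      Fintype.card F * #I +
        (∑ x ∈ I, ∑ y ∈ I, (quadraticChar F (x - y) : ℂ)) *
          gaussSum (complexQuadraticChar F) ψ := by
  have hkernel : ∀ d, ∑ a, (1 + (quadraticChar F a : ℂ)) * ψ (a * d) =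
      (if d = 0 then (Fintype.card F : ℂ) else 0) +
        quadraticChar F d * gaussSum (complexQuadraticChar F) ψ := by
    intro d
    simp_rw [add_mul, one_mul, sum_add_distrib, AddChar.sum_mulShift d hψ]
    rw [sum_quadraticChar_mul_addChar_mul hF d]
    push_cast
    rfl
  simp_rw [← AddChar.mulShift_apply (ψ := ψ), AddChar.ofReal_norm_sq_sum, AddChar.mulShift_apply,
    mul_sum]
  rw [sum_comm, sum_congr rfl fun _ _ => sum_comm]
  simp_rw [hkernel, sub_eq_zero, sum_add_distrib, sum_ite_eq, sum_ite_mem, inter_self, sum_const,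
    nsmul_eq_mul, ← sum_mul]
  ring

lemma sum_isSquare_eq_sum_one_add_quadraticChar {R : Type*} [CommRing R] (T : F → R) :
    ∑ r : {x : F // IsSquare x}, (if (r : F) = 0 then 1 else 2) * T r =
      ∑ a, (1 + (quadraticChar F a : R)) * T a := by
  refine (sum_subtype (univ.filter IsSquare) (by simp)
    fun a => (if a = 0 then (1 : R) else 2) * T a).symm.trans ?_
  rw [← sum_filter_add_sum_filter_not univ IsSquare, sum_eq_zero (s := univ.filter (¬IsSquare ·)),
    add_zero]
  · refine sum_congr rfl fun a ha => ?_
    by_cases ha0 : a = 0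
    · simp [ha0]
    · rw [if_neg ha0, (quadraticChar_one_iff_isSquare ha0).mpr (mem_filter.mp ha).2]
      norm_num
  · intro a ha
    rw [quadraticChar_neg_one_iff_not_isSquare.mpr (mem_filter.mp ha).2]
    simp

lemma sum_quadraticChar_sub_of_forall_ne_one {I : Finset F}
    (hI : ∀ x ∈ I, ∀ y ∈ I, x ≠ y → quadraticChar F (x - y) ≠ 1) :
    ∑ x ∈ I, ∑ y ∈ I, quadraticChar F (x - y) = #I - #I ^ 2 := by
  have hrow : ∀ x ∈ I, ∑ y ∈ I, quadraticChar F (x - y) = 1 - #I := by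
    intro x hx
    have hterm : ∀ y ∈ I, quadraticChar F (x - y) = (if x = y then 1 else 0) - 1 := by
      intro y hy
      by_cases hxy : x = y
      · simp [hxy]
      · rw [if_neg hxy]
        exact ((quadraticChar_dichotomy (sub_ne_zero.mpr hxy)).resolve_left
          (hI x hx y hy hxy)).trans (by norm_num)
    rw [sum_congr rfl hterm, sum_sub_distrib, sum_ite_eq I x, if_pos hx, sum_const, nsmul_one]
  rw [sum_congr rfl hrow, sum_const, nsmul_eq_mul]
  ring

end CharacterSums

lemma RIP.abs_sub_card_le {m n : Type*} [Fintype m] [Fintype n] {Φ : Matrix m n ℂ} {K : ℕ}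
    {δ : ℝ} (h : RIP Φ K δ) (S : Finset n) (hS : #S ≤ K) :
    |∑ r, ‖∑ i ∈ S, Φ r i‖ ^ 2 - #S| ≤ δ * #S := by
  classical
  obtain ⟨hlo, hhi⟩ := h (fun i => if i ∈ S then 1 else 0) (by simpa using hS)
  have hsq : ∑ i, (if i ∈ S then (1 : ℝ) else 0) ^ 2 = #S := by simp
  have hrow : ∀ r : m, ∑ i, Φ r i * ((if i ∈ S then (1 : ℝ) else 0 : ℝ) : ℂ) =
      ∑ i ∈ S, Φ r i := by
    simp only [apply_ite, Complex.ofReal_one, Complex.ofReal_zero, mul_one, mul_zero, sum_ite_mem,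
      univ_inter, implies_true]
  simp only [hsq, hrow] at hlo hhi
  rw [abs_sub_le_iff]
  constructor <;> linarith

section Paley

variable {p : ℕ} [Fact p.Prime]

lemma paleyMatrix_some (q : {x : ZMod p // IsSquare x}) (j : ZMod p) :
    paleyMatrix p q (some j) =
      (if (q : ZMod p) = 0 then (1 : ℂ) / √p else (√(2 / p) : ℂ)) *
        ZMod.stdAddChar⁻¹ ((q : ZMod p) * j) := by
  rw [paleyMatrix, AddChar.inv_apply', ZMod.stdAddChar_apply, ZMod.toCircle_apply,
    ← Complex.exp_neg]
  ring_nf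

lemma ofReal_sum_norm_sq_paleyMatrix (I : Finset (ZMod p)) :
    ((∑ r, ‖∑ i ∈ I.map .some, paleyMatrix p r i‖ ^ 2 : ℝ) : ℂ) =
      (∑ a, (1 + (quadraticChar (ZMod p) a : ℂ)) *
        ((‖∑ j ∈ I, ZMod.stdAddChar⁻¹ (a * j)‖ ^ 2 : ℝ) : ℂ)) / p := by
  rw [← sum_isSquare_eq_sum_one_add_quadraticChar, sum_div]
  push_cast
  refine sum_congr rfl fun r _ => ?_
  rw [sum_map]
  simp_rw [Function.Embedding.some_apply, paleyMatrix_some, ← mul_sum, norm_mul]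
  have hc : ‖if (r : ZMod p) = 0 then (1 : ℂ) / √p else (√(2 / p) : ℂ)‖ ^ 2 =
      (if (r : ZMod p) = 0 then 1 else 2) / p := by
    split_ifs
    · simp
    · rw [Complex.norm_real, Real.norm_of_nonneg (Real.sqrt_nonneg _),
        Real.sq_sqrt (by positivity)]
  rw [← Complex.ofReal_pow, mul_pow, hc]
  split_ifs <;> push_cast <;> ring

lemma abs_sum_norm_sq_paleyMatrix_sub_card (hp4 : p % 4 = 1) {I : Finset (ZMod p)}
    (hI : IsPaleyIndepSet p I) :
    |∑ r, ‖∑ i ∈ I.map .some, paleyMatrix p r i‖ ^ 2 - #I| = (#I ^ 2 - #I) / √p := by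
  have hF : ringChar (ZMod p) ≠ 2 := by rw [ZMod.ringChar_zmod_n]; omega
  have hψ : (ZMod.stdAddChar⁻¹ : AddChar (ZMod p) ℂ).IsPrimitive :=
    .of_ne_one <| inv_ne_one.mpr <| by simpa using ZMod.isPrimitive_stdAddChar p one_ne_zero
  obtain ⟨g, hg, hG⟩ : ∃ g : ℝ, |g| = √p ∧
      gaussSum (complexQuadraticChar (ZMod p)) (ZMod.stdAddChar (N := p))⁻¹ = g := by
    rcases gaussSum_complexQuadraticChar_eq_sqrt_or_eq_neg_sqrt hF (by rwa [ZMod.card]) hψ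
      with hG | hG <;> rw [ZMod.card] at hG
    · exact ⟨_, abs_of_nonneg (Real.sqrt_nonneg _), hG⟩
    · exact ⟨-√p, by rw [abs_neg, abs_of_nonneg (Real.sqrt_nonneg _)], by push_cast; exact hG⟩
  have hχ : ∑ x ∈ I, ∑ y ∈ I, (quadraticChar (ZMod p) (x - y) : ℂ) = #I - #I ^ 2 := by
    exact_mod_cast sum_quadraticChar_sub_of_forall_ne_one hI
  have hE := ofReal_sum_norm_sq_paleyMatrix I
  rw [sum_one_add_quadraticChar_mul_norm_sq hF hψ, hχ, hG, ZMod.card] at hE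
  have hE' : ∑ r, ‖∑ i ∈ I.map .some, paleyMatrix p r i‖ ^ 2 =
      (p * #I + (#I - #I ^ 2) * g) / p := by exact_mod_cast hE
  have hN : (#I : ℝ) ≤ #I ^ 2 := by exact_mod_cast Nat.le_self_pow two_ne_zero _
  have hp : (0 : ℝ) < p := by exact_mod_cast (Fact.out : p.Prime).pos
  rw [hE', show (p * #I + (#I - #I ^ 2) * g) / p - #I = -(g * ((#I ^ 2 - #I) / p)) by
      field_simp; ring,
    abs_neg, abs_mul, hg, abs_of_nonneg (div_nonneg (sub_nonneg.mpr hN) hp.le), mul_div_left_comm,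
    Real.sqrt_div_self', mul_one_div]

end Paley

theorem paley_RIP_indep_set_bound_general (p : ℕ) [Fact (Nat.Prime p)] (hp4 : p % 4 = 1)
    (K : ℕ) (δ : ℝ) (hδ0 : 0 ≤ δ)
    (hRIP : RIP (paleyMatrix p) K δ)
    (I : Finset (ZMod p)) (hI : IsPaleyIndepSet p I) (hIK : I.card ≤ K) :
    (I.card : ℝ) ≤ δ * Real.sqrt p + 1 := by
  have hsqrt : 0 < √(p : ℝ) := Real.sqrt_pos.mpr (by exact_mod_cast (Fact.out : p.Prime).pos)
  have hbound := hRIP.abs_sub_card_le (I.map .some) (by rwa [card_map])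
  rw [card_map, abs_sum_norm_sq_paleyMatrix_sub_card hp4 hI, div_le_iff₀ hsqrt] at hbound
  rcases I.card.eq_zero_or_pos with hempty | hpos
  · rw [hempty, Nat.cast_zero]
    positivity
  · have hmul : (#I : ℝ) * (#I - 1) ≤ #I * (δ * √p) := by linarith
    linarith [le_of_mul_le_mul_left hmul (by exact_mod_cast hpos)]

theorem paley_RIP_indep_set_bound (p : ℕ) [Fact (Nat.Prime p)] (hp4 : p % 4 = 1)
    (K : ℕ) (δ : ℝ) (hδ0 : 0 ≤ δ) (hδ1 : δ < 1)
    (hRIP : RIP (paleyMatrix p) K δ)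
    (I : Finset (ZMod p)) (hI : IsPaleyIndepSet p I) (hIK : I.card ≤ K) :
    (I.card : ℝ) ≤ δ * Real.sqrt p + 1 :=
  paley_RIP_indep_set_bound_general p hp4 K δ hδ0 hRIP I hI hIK
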